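/- arXiv:2006.14877 — 2 statements merged into one kernel-verified Lean document; each statement's English description precedes it below -/
import Mathlib

section
/- Let X and Y be measurable spaces, let N ≥ 1 be an integer, let Q and Q' be Markov kernels on X, and let K be a Markov kernel from X^N to Y. Define the Markov kernel P from X to Y by P(x̄, ·) = ∫_X Q(x̄, dx₀) ∫_{X^{N−1}} [∏_{k=2}^N Q(x₀, dx̃ₖ)] K((x̄, x̃₂, …, x̃_N), ·), and define P' analogously with Q' in place of Q (both occurrences). Then sup_{x̄∈X} ‖P(x̄,·) − P'(x̄,·)‖_tv ≤ N · sup_{x∈X} ‖Q(x,·) − Q'(x,·)‖_tv. (This is the abstract content of Lemma 1 of the paper: the auxiliary-initialisation CPF kernel, which first draws x₀ from Q(x̄,·), then draws N−1 fresh first-coordinate particles from Q(x₀,·), keeps x̄ as the first particle, and finally applies the conditional particle filter kernel K, is Lipschitz in the proposal kernel Q with constant N in total variation.) -/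
open MeasureTheory ProbabilityTheory

/-- Total variation distance: `sup_{‖f‖_∞ ≤ 1} |μ(f) − ν(f)|`. -/
noncomputable def tvDist {X : Type*} [MeasurableSpace X] (μ ν : Measure X) : ℝ :=
  ⨆ f : {f : X → ℝ // Measurable f ∧ ∀ x, |f x| ≤ 1},
    |∫ x, f.1 x ∂μ - ∫ x, f.1 x ∂ν|

/-- The auxiliary-initialisation CPF kernel: from the reference `xr`, draw
`x₀ ~ Q(xr, ·)`, draw `N − 1 = n` fresh first-coordinate particles i.i.d. from
`Q(x₀, ·)`, keep `xr` as the first particle, and apply the CPF kernel `K`. -/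
noncomputable def aicpfKernel {X Y : Type*} [MeasurableSpace X] [MeasurableSpace Y]
    (n : ℕ) (Q : Kernel X X) (K : Kernel (Fin (n + 1) → X) Y) (xr : X) : Measure Y :=
  (Q xr).bind fun x₀ =>
    (Measure.pi fun _ : Fin n => Q x₀).bind fun xtilde => K (Fin.cons xr xtilde)

section AicpfHelpers

open scoped ENNReal

variable {X Y Z : Type*} [MeasurableSpace X] [MeasurableSpace Y] [MeasurableSpace Z]

lemma aicpf_integrable_of_bdd (ν : Measure Y) [IsFiniteMeasure ν] {f : Y → ℝ}
    (hf : Measurable f) {C : ℝ} (hb : ∀ y, |f y| ≤ C) : Integrable f ν :=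
  (integrable_const C).mono' hf.aestronglyMeasurable
    (Filter.Eventually.of_forall fun y => by simpa [Real.norm_eq_abs] using hb y)

lemma aicpf_abs_integral_le (ν : Measure Y) [IsProbabilityMeasure ν] {f : Y → ℝ}
    {C : ℝ} (hb : ∀ y, |f y| ≤ C) : |∫ y, f y ∂ν| ≤ C := by
  have := norm_integral_le_of_norm_le_const (μ := ν) (f := f) (C := C)
    (Filter.Eventually.of_forall fun y => by simpa [Real.norm_eq_abs] using hb y)
  simpa [Real.norm_eq_abs, measure_univ] using this

/-- rewrite a bounded integral via a lintegral of `f + 1`. -/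
lemma aicpf_integral_eq_lintegral_shift (ν : Measure Y) [IsProbabilityMeasure ν] {f : Y → ℝ}
    (hf : Measurable f) (hb : ∀ y, |f y| ≤ 1) :
    ∫ y, f y ∂ν = (∫⁻ y, ENNReal.ofReal (f y + 1) ∂ν).toReal - 1 := by
  have h1 : ∫ y, (f y + 1) ∂ν = (∫⁻ y, ENNReal.ofReal (f y + 1) ∂ν).toReal := by
    rw [integral_eq_lintegral_of_nonneg_ae]
    · refine Filter.Eventually.of_forall fun y => ?_
      have := abs_le.1 (hb y)
      show (0:ℝ) ≤ f y + 1
      linarith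
    · exact (hf.add_const 1).aestronglyMeasurable
  have h2 : ∫ y, (f y + 1) ∂ν = (∫ y, f y ∂ν) + 1 := by
    rw [integral_add (aicpf_integrable_of_bdd ν hf hb) (integrable_const 1)]
    simp [measure_univ]
  linarith

lemma aicpf_lintegral_shift_le (ν : Measure Y) [IsProbabilityMeasure ν] {f : Y → ℝ}
    (hb : ∀ y, |f y| ≤ 1) : ∫⁻ y, ENNReal.ofReal (f y + 1) ∂ν ≤ 2 := by
  calc ∫⁻ y, ENNReal.ofReal (f y + 1) ∂ν ≤ ∫⁻ _, 2 ∂ν := by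
        refine lintegral_mono fun y => ?_
        have := abs_le.1 (hb y)
        calc ENNReal.ofReal (f y + 1) ≤ ENNReal.ofReal 2 := ENNReal.ofReal_le_ofReal (by linarith)
        _ = 2 := by norm_num
  _ = 2 := by simp [measure_univ]

lemma aicpf_measurable_integral_param {g : Z → Measure Y} (hg : Measurable g)
    (hgp : ∀ z, IsProbabilityMeasure (g z)) {f : Y → ℝ}
    (hf : Measurable f) (hb : ∀ y, |f y| ≤ 1) :
    Measurable fun z => ∫ y, f y ∂(g z) := by
  have : (fun z => ∫ y, f y ∂(g z))
      = fun z => (∫⁻ y, ENNReal.ofReal (f y + 1) ∂(g z)).toReal - 1 := by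
    funext z
    have := hgp z
    exact aicpf_integral_eq_lintegral_shift (g z) hf hb
  rw [this]
  exact (((Measure.measurable_lintegral
    (hf.add_const 1).ennreal_ofReal).comp hg).ennreal_toReal).sub measurable_const

lemma aicpf_isProbabilityMeasure_bind (μ : Measure X) [IsProbabilityMeasure μ]
    {g : X → Measure Y} (hg : Measurable g) (hgp : ∀ x, IsProbabilityMeasure (g x)) :
    IsProbabilityMeasure (μ.bind g) := by
  constructor
  rw [Measure.bind_apply MeasurableSet.univ hg.aemeasurable]
  simp [fun x => (hgp x).measure_univ, measure_univ]

lemma aicpf_integral_bind_bdd (μ : Measure X) [IsProbabilityMeasure μ]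
    {g : X → Measure Y} (hg : Measurable g) (hgp : ∀ x, IsProbabilityMeasure (g x))
    {f : Y → ℝ} (hf : Measurable f) (hb : ∀ y, |f y| ≤ 1) :
    ∫ y, f y ∂(μ.bind g) = ∫ x, ∫ y, f y ∂(g x) ∂μ := by
  have hP : IsProbabilityMeasure (μ.bind g) := aicpf_isProbabilityMeasure_bind μ hg hgp
  have hF : Measurable fun y => ENNReal.ofReal (f y + 1) := (hf.add_const 1).ennreal_ofReal
  have hlin : Measurable fun x => ∫⁻ y, ENNReal.ofReal (f y + 1) ∂(g x) :=
    (Measure.measurable_lintegral hF).comp hg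
  rw [aicpf_integral_eq_lintegral_shift _ hf hb, Measure.lintegral_bind hg.aemeasurable hF.aemeasurable]
  have h1 : ∫ x, ∫ y, f y ∂(g x) ∂μ
      = ∫ x, ((∫⁻ y, ENNReal.ofReal (f y + 1) ∂(g x)).toReal - 1) ∂μ := by
    refine integral_congr_ae (Filter.Eventually.of_forall fun x => ?_)
    have := hgp x
    exact aicpf_integral_eq_lintegral_shift (g x) hf hb
  have hint : Integrable (fun x => (∫⁻ y, ENNReal.ofReal (f y + 1) ∂(g x)).toReal) μ := by
    refine aicpf_integrable_of_bdd μ (hlin.ennreal_toReal) (C := 2) fun x => ?_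
    have := hgp x
    have h2 := aicpf_lintegral_shift_le (g x) hb
    rw [abs_of_nonneg ENNReal.toReal_nonneg]
    calc (∫⁻ y, ENNReal.ofReal (f y + 1) ∂(g x)).toReal ≤ (2 : ENNReal).toReal :=
      ENNReal.toReal_mono (by norm_num) h2
    _ = 2 := by norm_num
  have htr : ∫ x, (∫⁻ y, ENNReal.ofReal (f y + 1) ∂(g x)).toReal ∂μ
      = (∫⁻ x, ∫⁻ y, ENNReal.ofReal (f y + 1) ∂(g x) ∂μ).toReal := by
    refine integral_toReal hlin.aemeasurable (Filter.Eventually.of_forall fun x => ?_)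
    have := hgp x
    exact lt_of_le_of_lt (aicpf_lintegral_shift_le (g x) hb) (by norm_num)
  rw [h1, integral_sub hint (integrable_const 1), htr]
  simp [measure_univ]

lemma tvDist_bddAbove (μ ν : Measure X) [IsProbabilityMeasure μ] [IsProbabilityMeasure ν] :
    BddAbove (Set.range fun f : {f : X → ℝ // Measurable f ∧ ∀ x, |f x| ≤ 1} =>
      |∫ x, f.1 x ∂μ - ∫ x, f.1 x ∂ν|) := by
  refine ⟨2, ?_⟩
  rintro r ⟨f, rfl⟩
  have h1 := aicpf_abs_integral_le μ f.2.2
  have h2 := aicpf_abs_integral_le ν f.2.2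
  calc |∫ x, f.1 x ∂μ - ∫ x, f.1 x ∂ν| ≤ |∫ x, f.1 x ∂μ| + |∫ x, f.1 x ∂ν| := abs_sub _ _
  _ ≤ 2 := by linarith

lemma abs_sub_le_tvDist (μ ν : Measure X) [IsProbabilityMeasure μ] [IsProbabilityMeasure ν]
    {f : X → ℝ} (hf : Measurable f) (hb : ∀ x, |f x| ≤ 1) :
    |∫ x, f x ∂μ - ∫ x, f x ∂ν| ≤ tvDist μ ν :=
  le_ciSup (tvDist_bddAbove μ ν) ⟨f, hf, hb⟩

lemma tvDist_nonneg (μ ν : Measure X) [IsProbabilityMeasure μ] [IsProbabilityMeasure ν] :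
    0 ≤ tvDist μ ν := by
  have := abs_sub_le_tvDist μ ν (f := fun _ => 0) measurable_const (by simp)
  simpa using this

lemma tvDist_le_two (μ ν : Measure X) [IsProbabilityMeasure μ] [IsProbabilityMeasure ν] :
    tvDist μ ν ≤ 2 := by
  have : Nonempty {f : X → ℝ // Measurable f ∧ ∀ x, |f x| ≤ 1} :=
    ⟨⟨fun _ => 0, measurable_const, by simp⟩⟩
  refine ciSup_le fun f => ?_
  have h1 := aicpf_abs_integral_le μ f.2.2
  have h2 := aicpf_abs_integral_le ν f.2.2
  calc |∫ x, f.1 x ∂μ - ∫ x, f.1 x ∂ν| ≤ |∫ x, f.1 x ∂μ| + |∫ x, f.1 x ∂ν| := abs_sub _ _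
  _ ≤ 2 := by linarith

lemma aicpf_measurable_pi_fam (n : ℕ) (Q : Kernel X X) [IsMarkovKernel Q] :
    Measurable fun x => Measure.pi (fun _ : Fin n => Q x) := by
  induction n with
  | zero =>
    have : (fun x => Measure.pi fun _ : Fin 0 => Q x)
        = fun _ => Measure.dirac (isEmptyElim : Fin 0 → X) := by
      funext x; exact Measure.pi_of_empty _ _
    rw [this]; exact measurable_const
  | succ m ih =>
    have hηM : ∀ x, IsProbabilityMeasure (Measure.pi fun _ : Fin m => Q x) :=
      fun x => inferInstance
    let η : Kernel X (Fin m → X) := ⟨fun x => Measure.pi fun _ : Fin m => Q x, ih⟩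
    have : IsMarkovKernel η := ⟨fun x => hηM x⟩
    have heq : (fun x => Measure.pi fun _ : Fin (m + 1) => Q x)
        = fun x => Measure.map
            (MeasurableEquiv.piFinSuccAbove (fun _ : Fin (m + 1) => X) 0).symm
            ((Q x).prod (Measure.pi fun _ : Fin m => Q x)) := by
      funext x
      exact ((measurePreserving_piFinSuccAbove (fun _ : Fin (m + 1) => Q x) 0).symm
        _).map_eq.symm
    rw [heq]
    have hprod : Measurable fun x => (Q x).prod (Measure.pi fun _ : Fin m => Q x) := by
      have heq2 : (fun x => (Q x).prod (Measure.pi fun _ : Fin m => Q x))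
          = fun x => (Q ×ₖ η) x := by
        funext x; exact (Kernel.prod_apply Q η x).symm
      rw [heq2]; exact (Q ×ₖ η).measurable
    exact (Measure.measurable_map _ (MeasurableEquiv.measurable _)).comp hprod

/-- Telescoping bound for product measures. -/
lemma aicpf_pi_tele (n : ℕ) (μ ν : Measure X)
    [IsProbabilityMeasure μ] [IsProbabilityMeasure ν]
    {F : (Fin n → X) → ℝ} (hF : Measurable F) (hb : ∀ v, |F v| ≤ 1) :
    |∫ v, F v ∂(Measure.pi fun _ : Fin n => μ)
      - ∫ v, F v ∂(Measure.pi fun _ : Fin n => ν)| ≤ n * tvDist μ ν := by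
  induction n with
  | zero =>
    rw [Measure.pi_of_empty (fun _ : Fin 0 => μ) isEmptyElim,
      Measure.pi_of_empty (fun _ : Fin 0 => ν) isEmptyElim]
    simp
  | succ m ih =>
    set e := MeasurableEquiv.piFinSuccAbove (fun _ : Fin (m + 1) => X) 0 with he
    set G : X × (Fin m → X) → ℝ := fun z => F (e.symm z) with hGdef
    have hG : Measurable G := hF.comp e.symm.measurable
    have hGb : ∀ z, |G z| ≤ 1 := fun z => hb _
    have hμeq : ∫ v, F v ∂(Measure.pi fun _ : Fin (m + 1) => μ)
        = ∫ z, G z ∂(μ.prod (Measure.pi fun _ : Fin m => μ)) :=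
      (((measurePreserving_piFinSuccAbove (fun _ : Fin (m + 1) => μ) 0).symm
        e).integral_comp e.symm.measurableEmbedding F).symm
    have hνeq : ∫ v, F v ∂(Measure.pi fun _ : Fin (m + 1) => ν)
        = ∫ z, G z ∂(ν.prod (Measure.pi fun _ : Fin m => ν)) :=
      (((measurePreserving_piFinSuccAbove (fun _ : Fin (m + 1) => ν) 0).symm
        e).integral_comp e.symm.measurableEmbedding F).symm
    rw [hμeq, hνeq]
    set Pμ := (Measure.pi fun _ : Fin m => μ) with hPμ
    set Pν := (Measure.pi fun _ : Fin m => ν) with hPν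
    have hip : ∀ (ρ : Measure X) (P : Measure (Fin m → X)),
        IsProbabilityMeasure ρ → IsProbabilityMeasure P → Integrable G (ρ.prod P) := by
      intro ρ P h1 h2
      exact aicpf_integrable_of_bdd _ hG hGb
    have hfub1 : ∫ z, G z ∂(μ.prod Pμ) = ∫ x, ∫ y, G (x, y) ∂Pμ ∂μ :=
      integral_prod G (hip μ Pμ inferInstance inferInstance)
    have hfub2 : ∫ z, G z ∂(ν.prod Pμ) = ∫ x, ∫ y, G (x, y) ∂Pμ ∂ν :=
      integral_prod G (hip ν Pμ inferInstance inferInstance)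
    have hfub3 : ∫ z, G z ∂(ν.prod Pν) = ∫ x, ∫ y, G (x, y) ∂Pν ∂ν :=
      integral_prod G (hip ν Pν inferInstance inferInstance)
    set h1 : X → ℝ := fun x => ∫ y, G (x, y) ∂Pμ with hh1
    set h2 : X → ℝ := fun x => ∫ y, G (x, y) ∂Pν with hh2
    have hm1 : Measurable h1 :=
      (hG.stronglyMeasurable.integral_prod_right').measurable
    have hm2 : Measurable h2 :=
      (hG.stronglyMeasurable.integral_prod_right').measurable
    have hb1 : ∀ x, |h1 x| ≤ 1 := fun x => aicpf_abs_integral_le Pμ fun y => hGb (x, y)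
    have hb2 : ∀ x, |h2 x| ≤ 1 := fun x => aicpf_abs_integral_le Pν fun y => hGb (x, y)
    have T1 : |∫ x, h1 x ∂μ - ∫ x, h1 x ∂ν| ≤ tvDist μ ν :=
      abs_sub_le_tvDist μ ν hm1 hb1
    have hdiff : ∀ x, |h1 x - h2 x| ≤ m * tvDist μ ν := by
      intro x
      exact ih (F := fun y => G (x, y)) (hG.comp measurable_prodMk_left)
        (fun y => hGb (x, y))
    have T2 : |∫ x, h1 x ∂ν - ∫ x, h2 x ∂ν| ≤ m * tvDist μ ν := by
      rw [← integral_sub (aicpf_integrable_of_bdd ν hm1 hb1)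
        (aicpf_integrable_of_bdd ν hm2 hb2)]
      exact aicpf_abs_integral_le ν hdiff
    calc |∫ z, G z ∂(μ.prod Pμ) - ∫ z, G z ∂(ν.prod Pν)|
        = |(∫ x, h1 x ∂μ - ∫ x, h1 x ∂ν) + (∫ x, h1 x ∂ν - ∫ x, h2 x ∂ν)| := by
          rw [hfub1, hfub3]; ring_nf
      _ ≤ |∫ x, h1 x ∂μ - ∫ x, h1 x ∂ν| + |∫ x, h1 x ∂ν - ∫ x, h2 x ∂ν| := abs_add_le _ _
      _ ≤ tvDist μ ν + m * tvDist μ ν := add_le_add T1 T2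
      _ = (m + 1 : ℕ) * tvDist μ ν := by push_cast; ring

end AicpfHelpers

/-- Lemma 1: the AI-CPF kernel is Lipschitz in the proposal kernel `Q` with constant
`N = n + 1` in total variation. -/
theorem aicpf_tv_lipschitz {X Y : Type*} [MeasurableSpace X] [MeasurableSpace Y]
    (n : ℕ) (Q Q' : Kernel X X) [IsMarkovKernel Q] [IsMarkovKernel Q']
    (K : Kernel (Fin (n + 1) → X) Y) [IsMarkovKernel K] :
    ⨆ xr : X, tvDist (aicpfKernel n Q K xr) (aicpfKernel n Q' K xr)
      ≤ (n + 1 : ℝ) * ⨆ x : X, tvDist (Q x) (Q' x) := by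
  set D := ⨆ x : X, tvDist (Q x) (Q' x) with hD
  have hD0 : 0 ≤ D := Real.iSup_nonneg fun x => tvDist_nonneg _ _
  have hDbdd : BddAbove (Set.range fun x : X => tvDist (Q x) (Q' x)) := by
    refine ⟨2, ?_⟩
    rintro r ⟨x, rfl⟩
    exact tvDist_le_two _ _
  have hDle : ∀ x : X, tvDist (Q x) (Q' x) ≤ D := fun x => le_ciSup hDbdd x
  refine Real.iSup_le (fun xr => ?_) (mul_nonneg (by positivity) hD0)
  -- fixed reference trajectory `xr`
  have hcons : Measurable fun xt : Fin n → X => (Fin.cons xr xt : Fin (n + 1) → X) := by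
    refine measurable_pi_lambda _ fun i => ?_
    refine Fin.cases ?_ ?_ i
    · simp only [Fin.cons_zero]; exact measurable_const
    · intro j; simpa using measurable_pi_apply j
  have hKc : Measurable fun xt : Fin n → X => K (Fin.cons xr xt) :=
    K.measurable.comp hcons
  have hne : Nonempty {f : Y → ℝ // Measurable f ∧ ∀ y, |f y| ≤ 1} :=
    ⟨⟨fun _ => 0, measurable_const, by simp⟩⟩
  refine ciSup_le fun fs => ?_
  obtain ⟨f, hf, hb⟩ := fs
  simp only
  -- the inner CPF integral
  set F : (Fin n → X) → ℝ := fun xt => ∫ y, f y ∂(K (Fin.cons xr xt)) with hFdef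
  have hFmeas : Measurable F :=
    aicpf_measurable_integral_param hKc (fun xt => inferInstance) hf hb
  have hFb : ∀ xt, |F xt| ≤ 1 := fun xt => aicpf_abs_integral_le _ hb
  -- the two intermediate integrals
  set HQ : X → ℝ := fun x₀ => ∫ xt, F xt ∂(Measure.pi fun _ : Fin n => Q x₀) with hHQ
  set HQ' : X → ℝ := fun x₀ => ∫ xt, F xt ∂(Measure.pi fun _ : Fin n => Q' x₀) with hHQ'
  have hHQmeas : Measurable HQ :=
    aicpf_measurable_integral_param (aicpf_measurable_pi_fam n Q)
      (fun x => inferInstance) hFmeas hFb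
  have hHQ'meas : Measurable HQ' :=
    aicpf_measurable_integral_param (aicpf_measurable_pi_fam n Q')
      (fun x => inferInstance) hFmeas hFb
  have hHQb : ∀ x₀, |HQ x₀| ≤ 1 := fun x₀ => aicpf_abs_integral_le _ hFb
  have hHQ'b : ∀ x₀, |HQ' x₀| ≤ 1 := fun x₀ => aicpf_abs_integral_le _ hFb
  -- expansion of the aicpf integrals
  have hexp : ∀ (R : Kernel X X), IsMarkovKernel R →
      ∫ y, f y ∂(aicpfKernel n R K xr)
        = ∫ x₀, (∫ xt, F xt ∂(Measure.pi fun _ : Fin n => R x₀)) ∂(R xr) := by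
    intro R hR
    have hgmeas : Measurable fun x₀ =>
        (Measure.pi fun _ : Fin n => R x₀).bind fun xt => K (Fin.cons xr xt) :=
      (Measure.measurable_bind' hKc).comp (aicpf_measurable_pi_fam n R)
    have hgp : ∀ x₀, IsProbabilityMeasure
        ((Measure.pi fun _ : Fin n => R x₀).bind fun xt => K (Fin.cons xr xt)) :=
      fun x₀ => aicpf_isProbabilityMeasure_bind _ hKc fun xt => inferInstance
    rw [show aicpfKernel n R K xr = (R xr).bind fun x₀ =>
        (Measure.pi fun _ : Fin n => R x₀).bind fun xt => K (Fin.cons xr xt) from rfl,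
      aicpf_integral_bind_bdd (R xr) hgmeas hgp hf hb]
    refine integral_congr_ae (Filter.Eventually.of_forall fun x₀ => ?_)
    exact aicpf_integral_bind_bdd _ hKc (fun xt => inferInstance) hf hb
  rw [hexp Q inferInstance, hexp Q' inferInstance]
  -- pointwise bound from the telescoping lemma
  have hpt : ∀ x₀, |HQ x₀ - HQ' x₀| ≤ (n : ℝ) * D := by
    intro x₀
    refine le_trans (aicpf_pi_tele n (Q x₀) (Q' x₀) hFmeas hFb) ?_
    exact mul_le_mul_of_nonneg_left (hDle x₀) (by positivity)
  have T1 : |∫ x₀, HQ x₀ ∂(Q xr) - ∫ x₀, HQ x₀ ∂(Q' xr)| ≤ D :=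
    le_trans (abs_sub_le_tvDist (Q xr) (Q' xr) hHQmeas hHQb) (hDle xr)
  have T2 : |∫ x₀, HQ x₀ ∂(Q' xr) - ∫ x₀, HQ' x₀ ∂(Q' xr)| ≤ (n : ℝ) * D := by
    rw [← integral_sub (aicpf_integrable_of_bdd _ hHQmeas hHQb)
      (aicpf_integrable_of_bdd _ hHQ'meas hHQ'b)]
    exact aicpf_abs_integral_le _ hpt
  calc |∫ x₀, HQ x₀ ∂(Q xr) - ∫ x₀, HQ' x₀ ∂(Q' xr)|
      = |(∫ x₀, HQ x₀ ∂(Q xr) - ∫ x₀, HQ x₀ ∂(Q' xr))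
          + (∫ x₀, HQ x₀ ∂(Q' xr) - ∫ x₀, HQ' x₀ ∂(Q' xr))| := by ring_nf
    _ ≤ _ + _ := abs_add_le _ _
    _ ≤ D + (n : ℝ) * D := add_le_add T1 T2
    _ = (n + 1 : ℝ) * D := by ring
end

section
/- Let X be a measurable space, let T ≥ 1, let M₁ be a σ-finite measure on X, let Q be a Markov kernel on X reversible with respect to M₁, let M₂, …, M_T be Markov kernels on X, and let G_k : X^k → [0, ∞) be bounded measurable potential functions for k = 1, …, T. Define two measures on X^{T+1} by, for every measurable F : X^{T+1} → [0, ∞], ∫ F dA = ∫ M₁(dx₀) Q(x₀, dx₁) G₁(x₁) ∏_{k=2}^T M_k(x_{k−1}, dx_k) G_k(x_{1:k}) F(x_{0:T}) and ∫ F dB = ∫ M₁(dx₁) Q(x₁, dx₀) G₁(x₁) ∏_{k=2}^T M_k(x_{k−1}, dx_k) G_k(x_{1:k}) F(x_{0:T}). Then A = B. (In particular, when these measures are finite and nonzero with total mass Z, the augmented target π̃(dx_{0:T}) = π(dx_{1:T}) Q(x₁, dx₀), where π(dx_{1:T}) = Z^{-1} M₁(dx₁) G₁(x₁) ∏_{k=2}^T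 M_k(x_{k−1}, dx_k) G_k(x_{1:k}), is proportional to M₁(dx₀) Q(x₀, dx₁) G₁(x₁) ∏_{k=2}^T M_k(x_{k−1}, dx_k) G_k(x_{1:k}), and admits π as its marginal in x_{1:T}.) -/
open MeasureTheory ProbabilityTheory
open scoped ENNReal

/-- Given an initial measure `init` on pairs `(x₀, x₁)` (encoded as `Fin 2 → X`) and
Markov kernels `M k`, `chainExtend M init t` is the law of the path `x_{0:(t+1)}`
obtained by extending `init` with `x_k ~ M_k(x_{k−1}, ·)` for `k = 2, …, t + 1`. -/
noncomputable def chainExtend {X : Type*} [MeasurableSpace X]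
    (M : ℕ → ProbabilityTheory.Kernel X X) (init : Measure (Fin 2 → X)) :
    (t : ℕ) → Measure (Fin (t + 2) → X)
  | 0 => init
  | t + 1 => (chainExtend M init t).bind fun z =>
      ((M (t + 2)) (z (Fin.last (t + 1)))).map (Fin.snoc z)

/-- The product of the potentials along a path `x_{0:T}` (so `z i = x_i`):
`∏_{k=1}^T G_k(x_{1:k})`. -/
noncomputable def fkDensity {X : Type*} (T : ℕ)
    (G : (k : ℕ) → (Fin k → X) → ℝ≥0∞) (z : Fin (T + 1) → X) : ℝ≥0∞ :=
  ∏ k ∈ Finset.Icc 1 T,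
    G k fun i : Fin k => z ⟨min (i.val + 1) T, Nat.lt_succ_of_le (min_le_right _ _)⟩

section Aux

variable {X : Type*} [MeasurableSpace X]

lemma meas_pair : Measurable fun p : X × X => ![p.1, p.2] := by
  apply measurable_pi_lambda
  intro i
  fin_cases i
  · simpa using measurable_fst
  · simpa using measurable_snd

lemma meas_pair_swap : Measurable fun p : X × X => ![p.2, p.1] := by
  apply measurable_pi_lambda
  intro i
  fin_cases i
  · simpa using measurable_snd
  · simpa using measurable_fst

lemma meas_mk_left (x : X) : Measurable fun y : X => ![x, y] :=
  meas_pair.comp (measurable_const.prodMk measurable_id)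

lemma meas_mk_right (x : X) : Measurable fun y : X => ![y, x] :=
  meas_pair_swap.comp (measurable_const.prodMk measurable_id)

variable (Q : ProbabilityTheory.Kernel X X) [ProbabilityTheory.IsMarkovKernel Q]

lemma hQmap_left : Measurable fun x : X => ((Q x).map fun y => ![x, y]) := by
  apply Measure.measurable_of_measurable_coe
  intro s hs
  have h : ∀ x : X, ((Q x).map fun y => ![x, y]) s
      = Q x (Prod.mk x ⁻¹' ((fun p : X × X => ![p.1, p.2]) ⁻¹' s)) := fun x => by
    rw [Measure.map_apply (meas_mk_left x) hs]; rfl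
  simp_rw [h]
  exact Kernel.measurable_kernel_prodMk_left (meas_pair hs)

lemma hQmap_right : Measurable fun x : X => ((Q x).map fun y => ![y, x]) := by
  apply Measure.measurable_of_measurable_coe
  intro s hs
  have h : ∀ x : X, ((Q x).map fun y => ![y, x]) s
      = Q x (Prod.mk x ⁻¹' ((fun p : X × X => ![p.2, p.1]) ⁻¹' s)) := fun x => by
    rw [Measure.map_apply (meas_mk_right x) hs]; rfl
  simp_rw [h]
  exact Kernel.measurable_kernel_prodMk_left (meas_pair_swap hs)

lemma pair_map_apply_left (x : X) (s : Fin 2 → Set X) (hs : ∀ i, MeasurableSet (s i)) :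
    ((Q x).map fun y => ![x, y]) (Set.univ.pi s)
      = Set.indicator (s 0) (fun x => Q x (s 1)) x := by
  classical
  rw [Measure.map_apply (meas_mk_left x) (MeasurableSet.univ_pi hs)]
  by_cases hx : x ∈ s 0
  · have h : (fun y => ![x, y]) ⁻¹' Set.univ.pi s = s 1 := by
      ext y; simp [Set.mem_pi, Fin.forall_fin_two, hx]
    rw [h, Set.indicator_of_mem hx]
  · have h : (fun y => ![x, y]) ⁻¹' Set.univ.pi s = ∅ := by
      ext y; simp [Set.mem_pi, Fin.forall_fin_two, hx]
    rw [h, Set.indicator_of_notMem hx]; simp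

lemma pair_map_apply_right (x : X) (s : Fin 2 → Set X) (hs : ∀ i, MeasurableSet (s i)) :
    ((Q x).map fun y => ![y, x]) (Set.univ.pi s)
      = Set.indicator (s 1) (fun x => Q x (s 0)) x := by
  classical
  rw [Measure.map_apply (meas_mk_right x) (MeasurableSet.univ_pi hs)]
  by_cases hx : x ∈ s 1
  · have h : (fun y => ![y, x]) ⁻¹' Set.univ.pi s = s 0 := by
      ext y; simp [Set.mem_pi, Fin.forall_fin_two, hx]
    rw [h, Set.indicator_of_mem hx]
  · have h : (fun y => ![y, x]) ⁻¹' Set.univ.pi s = ∅ := by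
      ext y; simp [Set.mem_pi, Fin.forall_fin_two, hx]
    rw [h, Set.indicator_of_notMem hx]; simp

variable (M₁ : Measure X) [SigmaFinite M₁]

lemma bind_pi_left (s : Fin 2 → Set X) (hs : ∀ i, MeasurableSet (s i)) :
    (M₁.bind fun x₀ => (Q x₀).map fun x₁ => ![x₀, x₁]) (Set.univ.pi s)
      = ∫⁻ x in s 0, Q x (s 1) ∂M₁ := by
  rw [Measure.bind_apply (MeasurableSet.univ_pi hs) (hQmap_left Q).aemeasurable]
  simp_rw [pair_map_apply_left Q _ s hs]
  rw [lintegral_indicator (hs 0)]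

lemma bind_pi_right (s : Fin 2 → Set X) (hs : ∀ i, MeasurableSet (s i)) :
    (M₁.bind fun x₁ => (Q x₁).map fun x₀ => ![x₀, x₁]) (Set.univ.pi s)
      = ∫⁻ x in s 1, Q x (s 0) ∂M₁ := by
  rw [Measure.bind_apply (MeasurableSet.univ_pi hs) (hQmap_right Q).aemeasurable]
  simp_rw [pair_map_apply_right Q _ s hs]
  rw [lintegral_indicator (hs 1)]

lemma init_eq
    (hrev : ∀ A B : Set X, MeasurableSet A → MeasurableSet B →
      ∫⁻ x₀ in A, Q x₀ B ∂M₁ = ∫⁻ x₁ in B, Q x₁ A ∂M₁) :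
    (M₁.bind fun x₀ => (Q x₀).map fun x₁ => ![x₀, x₁])
      = (M₁.bind fun x₁ => (Q x₁).map fun x₀ => ![x₀, x₁]) := by
  refine Measure.ext_of_generateFrom_of_iUnion
    (Set.pi Set.univ '' Set.pi Set.univ fun _ : Fin 2 => {s : Set X | MeasurableSet s})
    (fun n => Set.univ.pi fun _ : Fin 2 => spanningSets M₁ n)
    generateFrom_pi.symm isPiSystem_pi ?_ ?_ ?_ ?_
  · ext f
    simp only [Set.mem_iUnion, Set.mem_pi, Set.mem_univ, forall_true_left, Set.mem_univ,
      iff_true, Fin.forall_fin_two]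
    obtain ⟨n, hn⟩ := Set.mem_iUnion.mp
      ((iUnion_spanningSets M₁).symm ▸ Set.mem_univ (f 0) : f 0 ∈ ⋃ n, spanningSets M₁ n)
    obtain ⟨m, hm⟩ := Set.mem_iUnion.mp
      ((iUnion_spanningSets M₁).symm ▸ Set.mem_univ (f 1) : f 1 ∈ ⋃ n, spanningSets M₁ n)
    exact ⟨max n m, monotone_spanningSets M₁ (le_max_left n m) hn,
      monotone_spanningSets M₁ (le_max_right n m) hm⟩
  · intro n
    exact ⟨fun _ => spanningSets M₁ n, fun i _ => measurableSet_spanningSets M₁ n, rfl⟩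
  · intro n
    rw [bind_pi_left Q M₁ _ fun _ => measurableSet_spanningSets M₁ n]
    have hle : ∫⁻ x in spanningSets M₁ n, Q x (spanningSets M₁ n) ∂M₁
        ≤ ∫⁻ _ in spanningSets M₁ n, 1 ∂M₁ :=
      lintegral_mono fun x => prob_le_one
    refine ne_of_lt (lt_of_le_of_lt hle ?_)
    rw [setLIntegral_one]
    exact measure_spanningSets_lt_top M₁ n
  · rintro _ ⟨s, hs, rfl⟩
    have hs' : ∀ i, MeasurableSet (s i) := fun i => hs i (Set.mem_univ i)
    rw [bind_pi_left Q M₁ s hs', bind_pi_right Q M₁ s hs']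
    exact hrev (s 0) (s 1) (hs' 0) (hs' 1)

end Aux

/-- If `Q` is reversible with respect to the σ-finite (possibly improper) initial
measure `M₁`, then the two measures on paths `x_{0:T}` (with `T = S + 1 ≥ 1`)
`A(dx_{0:T}) = M₁(dx₀) Q(x₀, dx₁) G₁(x₁) ∏_{k=2}^T M_k(x_{k−1}, dx_k) G_k(x_{1:k})` and
`B(dx_{0:T}) = M₁(dx₁) Q(x₁, dx₀) G₁(x₁) ∏_{k=2}^T M_k(x_{k−1}, dx_k) G_k(x_{1:k})`
coincide.  (In particular, when these are finite and nonzero, the augmented target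
`π̃(dx_{0:T}) = π(dx_{1:T}) Q(x₁, dx₀)` is proportional to
`M₁(dx₀) Q(x₀, dx₁) G₁(x₁) ∏_{k=2}^T M_k(x_{k−1}, dx_k) G_k(x_{1:k})` and admits the
smoothing distribution `π` as its marginal in `x_{1:T}`.) -/
theorem augmented_target_eq {X : Type*} [MeasurableSpace X] (S : ℕ)
    (M₁ : Measure X) [SigmaFinite M₁]
    (Q : ProbabilityTheory.Kernel X X) [ProbabilityTheory.IsMarkovKernel Q]
    (hrev : ∀ A B : Set X, MeasurableSet A → MeasurableSet B →
      ∫⁻ x₀ in A, Q x₀ B ∂M₁ = ∫⁻ x₁ in B, Q x₁ A ∂M₁)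
    (M : ℕ → ProbabilityTheory.Kernel X X)
    [∀ k, ProbabilityTheory.IsMarkovKernel (M k)]
    (G : (k : ℕ) → (Fin k → X) → ℝ≥0∞)
    (hGmeas : ∀ k, Measurable (G k))
    (hGbdd : ∀ k, ∃ C : ℝ≥0∞, C ≠ ⊤ ∧ ∀ v, G k v ≤ C) :
    (chainExtend M (M₁.bind fun x₀ => (Q x₀).map fun x₁ => ![x₀, x₁]) S).withDensity
        (fkDensity (S + 1) G)
      = (chainExtend M (M₁.bind fun x₁ => (Q x₁).map fun x₀ => ![x₀, x₁]) S).withDensity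
        (fkDensity (S + 1) G) := by
  rw [init_eq Q M₁ hrev]
end
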